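/- For every fixed l ∈ ℕ, P({I_n ≤ l} ∪ {I_n = n}) → 0 as n → ∞. -/

import Mathlib

/-!
Put `η = n - s₀ - b s₁` and let `μ` be the law of `V`. Given `V = x`, `I_n - s₁` is binomial with
parameters `η, x`, so `P(I_n = k + s₁)` is the `μ`-integral of the Bernstein basis polynomial
`b_{η,k}`; these masses sum to one over `k ≤ η`. Hence, up to a null set, `{I_n ≤ l} ∪ {I_n = n}`
is covered by the atoms `k ≤ l` and `k = η` (the latter because `b ≥ 1`). For `x ∈ (0,1)` one has
`b_{η,k}(x) ≤ η^k (1-x)^(η-k) → 0` for fixed `k` and `b_{η,η}(x) = x^η → 0`; since `V` has a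
density, `μ` lives on `(0,1)`, and dominated convergence finishes the proof.
-/

open MeasureTheory Filter Topology Polynomial Set

section Bernstein

variable {x : ℝ}

lemma bernsteinPolynomial_eval (m k : ℕ) (x : ℝ) :
    (bernsteinPolynomial ℝ m k).eval x = m.choose k * x ^ k * (1 - x) ^ (m - k) := by
  simp [bernsteinPolynomial]

lemma bernsteinPolynomial_eval_nonneg (hx : x ∈ Icc 0 1) (m k : ℕ) :
    0 ≤ (bernsteinPolynomial ℝ m k).eval x := by
  rw [bernsteinPolynomial_eval]
  exact mul_nonneg (mul_nonneg (Nat.cast_nonneg _) (pow_nonneg hx.1 k))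
    (pow_nonneg (sub_nonneg.2 hx.2) _)

lemma sum_bernsteinPolynomial_eval (m : ℕ) (x : ℝ) :
    ∑ k ∈ Finset.range (m + 1), (bernsteinPolynomial ℝ m k).eval x = 1 := by
  simpa [eval_finsetSum] using congr_arg (eval x) (bernsteinPolynomial.sum ℝ m)

lemma bernsteinPolynomial_eval_le_one (hx : x ∈ Icc 0 1) (m k : ℕ) :
    (bernsteinPolynomial ℝ m k).eval x ≤ 1 := by
  rcases le_or_gt k m with hkm | hmk
  · rw [← sum_bernsteinPolynomial_eval m x]
    exact Finset.single_le_sum (fun i _ ↦ bernsteinPolynomial_eval_nonneg hx m i)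
      (Finset.mem_range.2 (Nat.lt_succ_of_le hkm))
  · simp [bernsteinPolynomial.eq_zero_of_lt ℝ hmk]

lemma tendsto_bernsteinPolynomial_eval_atTop (hx : x ∈ Ioo 0 1) (k : ℕ) :
    Tendsto (fun m ↦ (bernsteinPolynomial ℝ m k).eval x) atTop (𝓝 0) := by
  have h1x : 0 < 1 - x := sub_pos.2 hx.2
  have hgeom : Tendsto (fun m : ℕ ↦ (m : ℝ) ^ k * (1 - x) ^ m / (1 - x) ^ k) atTop (𝓝 0) := by
    simpa using (tendsto_pow_const_mul_const_pow_of_abs_lt_one k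
      (abs_lt.2 ⟨by linarith, by linarith [hx.1]⟩)).div_const ((1 - x) ^ k)
  refine squeeze_zero' (Eventually.of_forall fun m ↦
    bernsteinPolynomial_eval_nonneg (Ioo_subset_Icc_self hx) m k) ?_ hgeom
  filter_upwards [eventually_ge_atTop k] with m hkm
  rw [bernsteinPolynomial_eval, mul_div_assoc, div_eq_mul_inv, ← pow_sub₀ _ h1x.ne' hkm]
  gcongr
  calc (m.choose k : ℝ) * x ^ k ≤ m.choose k :=
        mul_le_of_le_one_right (Nat.cast_nonneg _) (pow_le_one₀ hx.1.le hx.2.le)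
    _ ≤ m ^ k := mod_cast Nat.choose_le_pow m k

lemma tendsto_bernsteinPolynomial_self_eval_atTop (hx : x ∈ Ico 0 1) :
    Tendsto (fun m ↦ (bernsteinPolynomial ℝ m m).eval x) atTop (𝓝 0) := by
  simpa [bernsteinPolynomial_eval] using tendsto_pow_atTop_nhds_zero_of_lt_one hx.1 hx.2

end Bernstein

section Mixture

variable {μ : Measure ℝ}

lemma ae_mem_Ioo_of_absolutelyContinuous {a b : ℝ} (hac : μ ≪ volume)
    (h : ∀ᵐ x ∂μ, x ∈ Icc a b) : ∀ᵐ x ∂μ, x ∈ Ioo a b := by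
  filter_upwards [h, hac.ae_eq Ioo_ae_eq_Icc] with x hx hIoo
  exact hIoo.mpr hx

variable [IsFiniteMeasure μ]

lemma integrable_bernsteinPolynomial_eval (hμ : ∀ᵐ x ∂μ, x ∈ Icc 0 1) (m k : ℕ) :
    Integrable (fun x ↦ (bernsteinPolynomial ℝ m k).eval x) μ := by
  refine (integrable_const 1).mono' (Polynomial.continuous _).aestronglyMeasurable ?_
  filter_upwards [hμ] with x hx
  rw [Real.norm_of_nonneg (bernsteinPolynomial_eval_nonneg hx m k)]
  exact bernsteinPolynomial_eval_le_one hx m k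

lemma sum_integral_bernsteinPolynomial_eval [IsProbabilityMeasure μ]
    (hμ : ∀ᵐ x ∂μ, x ∈ Icc 0 1) (m : ℕ) :
    ∑ k ∈ Finset.range (m + 1), ∫ x, (bernsteinPolynomial ℝ m k).eval x ∂μ = 1 := by
  rw [← integral_finsetSum _ fun k _ ↦ integrable_bernsteinPolynomial_eval hμ m k]
  simp [sum_bernsteinPolynomial_eval]

lemma tendsto_integral_bernsteinPolynomial_eval (hμ : ∀ᵐ x ∂μ, x ∈ Ioo 0 1) {κ : ℕ → ℕ}
    (hκ : ∀ x ∈ Ioo 0 1, Tendsto (fun m ↦ (bernsteinPolynomial ℝ m (κ m)).eval x) atTop (𝓝 0)) :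
    Tendsto (fun m ↦ ∫ x, (bernsteinPolynomial ℝ m (κ m)).eval x ∂μ) atTop (𝓝 0) := by
  have hIcc : ∀ᵐ x ∂μ, x ∈ Icc 0 1 := hμ.mono fun _ hx ↦ Ioo_subset_Icc_self hx
  simpa using tendsto_integral_of_dominated_convergence (fun _ ↦ 1)
    (fun m ↦ (Polynomial.continuous _).aestronglyMeasurable) (integrable_const 1)
    (fun m ↦ hIcc.mono fun x hx ↦ by
      rw [Real.norm_of_nonneg (bernsteinPolynomial_eval_nonneg hx m _)]
      exact bernsteinPolynomial_eval_le_one hx m _)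
    (hμ.mono hκ)

end Mixture

section AtomBound

variable {Ω : Type*} [MeasurableSpace Ω] {ℙ : Measure Ω} [IsProbabilityMeasure ℙ] {X : Ω → ℕ}
  {s m : ℕ}

lemma ae_exists_eq_add_of_sum_measure_eq_one (hX : Measurable X)
    (h : ∑ k ∈ Finset.range (m + 1), ℙ {ω | X ω = k + s} = 1) :
    ∀ᵐ ω ∂ℙ, ∃ k ≤ m, X ω = k + s := by
  have hmeas (k : ℕ) : MeasurableSet {ω | X ω = k + s} := hX (measurableSet_singleton _)
  have hU : ℙ (⋃ k ∈ Finset.range (m + 1), {ω | X ω = k + s}) = 1 := by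
    rw [measure_biUnion_finset (fun i _ j _ hij ↦ Set.disjoint_left.2 fun ω hi hj ↦
      hij (by simp_all)) fun k _ ↦ hmeas k, h]
  filter_upwards [(mem_ae_iff_prob_eq_one
    (Finset.measurableSet_biUnion _ fun k _ ↦ hmeas k)).2 hU] with ω hω
  simpa [Nat.lt_succ_iff] using hω

lemma measure_le_or_eq_le_of_sum_measure_eq_one (hX : Measurable X)
    (h : ∑ k ∈ Finset.range (m + 1), ℙ {ω | X ω = k + s} = 1) {n : ℕ} (hmn : m + s ≤ n)
    (l : ℕ) :
    ℙ {ω | X ω ≤ l ∨ X ω = n} ≤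
      ∑ k ∈ Finset.range (l + 1), ℙ {ω | X ω = k + s} + ℙ {ω | X ω = m + s} :=
  calc ℙ {ω | X ω ≤ l ∨ X ω = n}
      ≤ ℙ ((⋃ k ∈ Finset.range (l + 1), {ω | X ω = k + s}) ∪ {ω | X ω = m + s}) := by
        refine measure_mono_ae ?_
        filter_upwards [ae_exists_eq_add_of_sum_measure_eq_one hX h] with ω ⟨k, hkm, hk⟩ hω
        rcases (hω : X ω ≤ l ∨ X ω = n) with hl | hn
        · exact Or.inl (mem_biUnion (Finset.mem_range.2 (by omega)) hk)
        · exact Or.inr (show X ω = m + s by omega)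
    _ ≤ _ := (measure_union_le _ _).trans (add_le_add_left (measure_biUnion_finset_le _ _) _)

end AtomBound

lemma measure_eq_ofReal_integral_bernsteinPolynomial {Ω : Type*} [MeasurableSpace Ω]
    {ℙ : Measure Ω} {V : Ω → ℝ} (hV : Measurable V) {A : Set Ω} (hA : ℙ A ≠ ⊤) {m k : ℕ}
    (h : (ℙ A).toReal = ∫ ω, (m.choose k : ℝ) * V ω ^ k * (1 - V ω) ^ (m - k) ∂ℙ) :
    ℙ A = ENNReal.ofReal (∫ x, (bernsteinPolynomial ℝ m k).eval x ∂ℙ.map V) := by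
  rw [← ENNReal.ofReal_toReal hA, h,
    integral_map hV.aemeasurable (Polynomial.continuous _).aestronglyMeasurable]
  simp only [bernsteinPolynomial_eval]

section BinomialMixture

variable {Ω : Type*} [MeasurableSpace Ω] {ℙ : Measure Ω} {μ : Measure ℝ} [IsProbabilityMeasure μ]
  {X : ℕ → Ω → ℕ} {η : ℕ → ℕ} {s : ℕ}

lemma tendsto_measure_eq_add_of_bernstein (hμ : ∀ᵐ x ∂μ, x ∈ Ioo 0 1)
    (hη : Tendsto η atTop atTop)
    (hX : ∀ᶠ n in atTop, ∀ k ≤ η n, ℙ {ω | X n ω = k + s} =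
      ENNReal.ofReal (∫ x, (bernsteinPolynomial ℝ (η n) k).eval x ∂μ))
    {κ : ℕ → ℕ}
    (hκ : ∀ x ∈ Ioo 0 1, Tendsto (fun m ↦ (bernsteinPolynomial ℝ m (κ m)).eval x) atTop (𝓝 0))
    (hκη : ∀ᶠ n in atTop, κ (η n) ≤ η n) :
    Tendsto (fun n ↦ ℙ {ω | X n ω = κ (η n) + s}) atTop (𝓝 0) := by
  have := ENNReal.tendsto_ofReal ((tendsto_integral_bernsteinPolynomial_eval hμ hκ).comp hη)
  rw [ENNReal.ofReal_zero] at this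
  refine this.congr' ?_
  filter_upwards [hX, hκη] with n hn hk using (hn _ hk).symm

lemma tendsto_measure_le_or_eq_of_bernstein [IsProbabilityMeasure ℙ]
    (hμ : ∀ᵐ x ∂μ, x ∈ Ioo 0 1) (hη : Tendsto η atTop atTop)
    (hX : ∀ᶠ n in atTop, ∀ k ≤ η n, ℙ {ω | X n ω = k + s} =
      ENNReal.ofReal (∫ x, (bernsteinPolynomial ℝ (η n) k).eval x ∂μ))
    (hXmeas : ∀ n, Measurable (X n)) (hηs : ∀ᶠ n in atTop, η n + s ≤ n) (l : ℕ) :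
    Tendsto (fun n ↦ ℙ {ω | X n ω ≤ l ∨ X n ω = n}) atTop (𝓝 0) := by
  have hμIcc : ∀ᵐ x ∂μ, x ∈ Icc 0 1 := hμ.mono fun _ hx ↦ Ioo_subset_Icc_self hx
  have hbound : ∀ᶠ n in atTop, ℙ {ω | X n ω ≤ l ∨ X n ω = n} ≤
      ∑ k ∈ Finset.range (l + 1), ℙ {ω | X n ω = k + s} + ℙ {ω | X n ω = η n + s} := by
    filter_upwards [hX, hηs] with n hn hηsn
    refine measure_le_or_eq_le_of_sum_measure_eq_one (hXmeas n) ?_ hηsn l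
    rw [Finset.sum_congr rfl fun k hk ↦ hn k (Nat.lt_succ_iff.1 (Finset.mem_range.1 hk)),
      ← ENNReal.ofReal_sum_of_nonneg fun k _ ↦ integral_nonneg_of_ae (hμIcc.mono fun x hx ↦
        bernsteinPolynomial_eval_nonneg hx _ _),
      sum_integral_bernsteinPolynomial_eval hμIcc, ENNReal.ofReal_one]
  have hlim : Tendsto (fun n ↦ ∑ k ∈ Finset.range (l + 1), ℙ {ω | X n ω = k + s} +
      ℙ {ω | X n ω = η n + s}) atTop (𝓝 0) := by
    simpa using (tendsto_finsetSum _ fun k _ ↦ tendsto_measure_eq_add_of_bernstein hμ hη hX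
      (fun x hx ↦ tendsto_bernsteinPolynomial_eval_atTop hx k) (hη.eventually_ge_atTop k)).add
      (tendsto_measure_eq_add_of_bernstein (κ := id) hμ hη hX
        (fun x hx ↦ tendsto_bernsteinPolynomial_self_eval_atTop (Ioo_subset_Ico_self hx))
        (Eventually.of_forall fun _ ↦ le_rfl))
  exact tendsto_of_tendsto_of_tendsto_of_le_of_le' tendsto_const_nhds hlim
    (Eventually.of_forall fun _ ↦ zero_le) hbound

end BinomialMixture

theorem stmt19_general
    (b s₀ s₁ : ℕ) (hb : 2 ≤ b)
    {Ω : Type*} [MeasurableSpace Ω] (ℙ : Measure Ω) [IsProbabilityMeasure ℙ]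
    (V : Ω → ℝ) (hVmeas : Measurable V)
    (hV01 : ∀ ω, V ω ∈ Set.Icc (0:ℝ) 1)
    (hVdens : ℙ.map V ≪ (volume : Measure ℝ))
    (I : ℕ → Ω → ℕ) (hImeas : ∀ n, Measurable (I n))
    (hIdist : ∀ n : ℕ, s₀ + b * s₁ ≤ n → ∀ k : ℕ, k ≤ n - s₀ - b * s₁ →
      (ℙ {ω | I n ω = k + s₁}).toReal
        = ∫ ω, ((n - s₀ - b * s₁).choose k : ℝ) * V ω ^ k
            * (1 - V ω) ^ (n - s₀ - b * s₁ - k) ∂ℙ) :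
    ∀ l : ℕ, Tendsto (fun n : ℕ => ℙ {ω | I n ω ≤ l ∨ I n ω = n}) atTop (𝓝 0) := by
  have := Measure.isProbabilityMeasure_map (μ := ℙ) hVmeas.aemeasurable
  have hV : ∀ᵐ x ∂ℙ.map V, x ∈ Ioo 0 1 := ae_mem_Ioo_of_absolutelyContinuous hVdens
    ((ae_map_iff hVmeas.aemeasurable measurableSet_Icc).2 (ae_of_all _ hV01))
  refine tendsto_measure_le_or_eq_of_bernstein (η := fun n ↦ n - s₀ - b * s₁) (s := s₁) hV
    ((tendsto_sub_atTop_nat _).comp (tendsto_sub_atTop_nat _)) ?_ hImeas ?_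
  · filter_upwards [eventually_ge_atTop (s₀ + b * s₁)] with n hn k hk
    exact measure_eq_ofReal_integral_bernsteinPolynomial hVmeas (measure_ne_top _ _)
      (hIdist n hn k hk)
  · filter_upwards [eventually_ge_atTop (s₀ + b * s₁)] with n hn
    have := Nat.le_mul_of_pos_left s₁ (by omega : 0 < b)
    omega

/-- For every fixed `l ∈ ℕ`, `P({I_n ≤ l} ∪ {I_n = n}) → 0` as `n → ∞`,
where `I n` is the size of the first subtree of a random split tree with `n` balls. -/
theorem stmt19
    (b s₀ s₁ : ℕ) (hb : 2 ≤ b)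
    {Ω : Type*} [MeasurableSpace Ω] (ℙ : Measure Ω) [IsProbabilityMeasure ℙ]
    (V : Ω → ℝ) (hVmeas : Measurable V)
    (hV01 : ∀ ω, V ω ∈ Set.Icc (0:ℝ) 1)
    (hVdens : ℙ.map V ≪ (volume : Measure ℝ))
    (hVtail : ∀ x : ℝ, x < 1 → ℙ {ω | V ω ≤ x} < 1)
    (hEV : (∫ ω, V ω ∂ℙ) = 1 / b)
    (I : ℕ → Ω → ℕ) (hImeas : ∀ n, Measurable (I n))
    (hIdist : ∀ n : ℕ, s₀ + b * s₁ ≤ n → ∀ k : ℕ, k ≤ n - s₀ - b * s₁ →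
      (ℙ {ω | I n ω = k + s₁}).toReal
        = ∫ ω, ((n - s₀ - b * s₁).choose k : ℝ) * V ω ^ k
            * (1 - V ω) ^ (n - s₀ - b * s₁ - k) ∂ℙ) :
    ∀ l : ℕ, Tendsto (fun n : ℕ => ℙ {ω | I n ω ≤ l ∨ I n ω = n}) atTop (𝓝 0) :=
  stmt19_general b s₀ s₁ hb ℙ V hVmeas hV01 hVdens I hImeas hIdist
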